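/- Let (X,d) be a complete metric space and S = (f_1,...,f_n) a GIFS of order m with attractor A and address map g : Ω → X. Then for every α ∈ Ω and every nonempty compact H ⊂ X, the sets f_{α|_k}(H_k) converge to the singleton {g(α)} in the Hausdorff metric, where H_1 = H^m and H_{k+1} = (H_k)^m. -/

import Mathlib

open Filter Topology NNReal ENNReal

/-- The levels of the code space: `Ω_1 = {1,…,n}`, `Ω_{k+1} = (Ω_k)^m`
(here indexed from `0`). -/
def OmegaL (n m : ℕ) : ℕ → Type
  | 0 => Fin n
  | k + 1 => Fin m → OmegaL n m k

/-- The code space `Ω = Π_k Ω_k`. -/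
abbrev CodeSpace (n m : ℕ) : Type := ∀ k : ℕ, OmegaL n m k

instance OmegaL.decEq (n m : ℕ) : ∀ k, DecidableEq (OmegaL n m k)
  | 0 => inferInstanceAs (DecidableEq (Fin n))
  | k + 1 => letI := OmegaL.decEq n m k
             inferInstanceAs (DecidableEq (Fin m → OmegaL n m k))

instance OmegaL.fintype (n m : ℕ) : ∀ k, Fintype (OmegaL n m k)
  | 0 => inferInstanceAs (Fintype (Fin n))
  | k + 1 => letI := OmegaL.fintype n m k
             inferInstanceAs (Fintype (Fin m → OmegaL n m k))

instance OmegaL.topologicalSpace (n m k : ℕ) : TopologicalSpace (OmegaL n m k) := ⊥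

instance OmegaL.discreteTopology (n m k : ℕ) : DiscreteTopology (OmegaL n m k) := ⟨rfl⟩

/-- The metric `d(α,β) = Σ_k d_k(α^k,β^k)/(m+1)^{k+1}` on `Ω`,
where `d_k` is the 0-1 (discrete) metric on `Ω_k`. -/
noncomputable def codeDist {n m : ℕ} (α β : CodeSpace n m) : ℝ :=
  ∑' k : ℕ, (if α k = β k then 0 else 1) / (m + 1) ^ (k + 1)

/-- The shift maps `τ_j : Ω^m → Ω`,
`τ_j(α_1,…,α_m) = (j, (α_1^1,…,α_m^1), (α_1^2,…,α_m^2), …)`. -/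
def tau {n m : ℕ} (j : Fin n) (a : Fin m → CodeSpace n m) : CodeSpace n m :=
  fun k => match k with
  | 0 => j
  | k + 1 => fun i => a i k

/-- The iterated product spaces `X_1 = X^m`, `X_{k+1} = (X_k)^m`
(indexed from `0`). -/
def Xk (X : Type*) (m : ℕ) : ℕ → Type _
  | 0 => Fin m → X
  | k + 1 => Fin m → Xk X m k

/-- For a code `α = (α^1, α^2, …)`, the code `α(i) = (α^2_i, α^3_i, …)`. -/
def shiftCode {n m : ℕ} (α : CodeSpace n m) (i : Fin m) : CodeSpace n m :=
  fun k => (α (k + 1) : Fin m → OmegaL n m k) i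

/-- The maps `f_α : X_{k+1} → X` for `α` (a code restricted to its first `k+1`
symbols): `f_{(α^1)} = f_{α^1}` and
`f_α(x_1,…,x_m) = f_{α^1}(f_{α(1)}(x_1),…,f_{α(m)}(x_m))`. -/
def fA {X : Type*} {n m : ℕ} (f : Fin n → (Fin m → X) → X) :
    ∀ k : ℕ, CodeSpace n m → Xk X m k → X
  | 0, α, x => f (α 0) x
  | k + 1, α, x => f (α 0) (fun i => fA f k (shiftCode α i) ((x : Fin m → Xk X m k) i))

/-- The iterated products `K_1 = K^m`, `K_{k+1} = (K_k)^m` of a set `K ⊆ X`. -/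
def Spow {X : Type*} (m : ℕ) (K : Set X) : ∀ k : ℕ, Set (Xk X m k)
  | 0 => Set.univ.pi fun _ => K
  | k + 1 => (Set.univ.pi fun _ => Spow m K k : Set (Fin m → Xk X m k))

/-- The diagonal points `x^1 = x`, `x^{k+1} = (x^k,…,x^k)`. -/
def diag {X : Type*} {m : ℕ} (x : Fin m → X) : ∀ k : ℕ, Xk X m k
  | 0 => x
  | k + 1 => (fun _ => diag x k : Fin m → Xk X m k)

/-- Extending a code `α` (thought of as its first `k+1` symbols `α^1,…,α^{k+1}`)
by a new symbol `β ∈ Ω_{k+2}`: the concatenation `α ⌢ β`. -/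
def extendCode {n m : ℕ} (α : CodeSpace n m) (k : ℕ) (β : OmegaL n m (k + 1)) :
    CodeSpace n m :=
  fun j => if h : j = k + 1 then cast (congrArg (OmegaL n m) h.symm) β else α j

/-! The pieces `f_{α|k}(H'_k)` over `H' = H ∪ A` contain both `f_{α|k}(H_k)` and `g α`
(the latter because `g α ∈ f_{α|k}(A_k)`). Their diameters are at most `φ^[k+1] (diam H')`,
and the iterates of `φ` tend to `0`: they decrease, and upper semicontinuity together with
`φ t < t` rules out a positive limit. -/

noncomputable instance Xk.instMetricSpace (X : Type*) [MetricSpace X] (m : ℕ) :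
    ∀ k, MetricSpace (Xk X m k)
  | 0 => inferInstanceAs (MetricSpace (Fin m → X))
  | k + 1 => @metricSpacePi (Fin m) (fun _ => Xk X m k) _ (fun _ => Xk.instMetricSpace X m k)

section Spow

variable {X : Type*} {m : ℕ} {K : Set X}

lemma Spow_mono {K' : Set X} (h : K ⊆ K') : ∀ k, Spow m K k ⊆ Spow m K' k
  | 0 => Set.pi_mono fun _ _ => h
  | k + 1 => Set.pi_mono fun _ _ => Spow_mono h k

lemma Spow_nonempty (h : K.Nonempty) : ∀ k, (Spow m K k).Nonempty
  | 0 => Set.univ_pi_nonempty_iff.2 fun _ => h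
  | k + 1 => Set.univ_pi_nonempty_iff.2 fun _ => Spow_nonempty h k

lemma nndist_le_of_mem_Spow [MetricSpace X] {C : ℝ≥0}
    (hC : ∀ ⦃a⦄, a ∈ K → ∀ ⦃b⦄, b ∈ K → nndist a b ≤ C) :
    ∀ k, ∀ ⦃x⦄, x ∈ Spow m K k → ∀ ⦃y⦄, y ∈ Spow m K k → nndist x y ≤ C
  | 0, _, hx, _, hy => nndist_pi_le_iff.2 fun i => hC (hx i trivial) (hy i trivial)
  | k + 1, _, hx, _, hy => nndist_pi_le_iff.2 fun i =>
      nndist_le_of_mem_Spow hC k (hx i trivial) (hy i trivial)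

end Spow

section Contraction

variable {φ : ℝ≥0 → ℝ≥0}

lemma apply_le_self_of_lt_self (hmono : Monotone φ) (hlt : ∀ t, 0 < t → φ t < t) (t : ℝ≥0) :
    φ t ≤ t := by
  rcases eq_zero_or_pos t with rfl | ht
  · by_contra! h0
    exact (hlt _ h0).not_ge (hmono h0.le)
  · exact (hlt t ht).le

lemma tendsto_iterate_nhds_zero (hmono : Monotone φ) (husc : UpperSemicontinuous φ)
    (hlt : ∀ t, 0 < t → φ t < t) (C : ℝ≥0) :
    Tendsto (fun k => φ^[k] C) atTop (𝓝 0) := by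
  have hanti : Antitone fun k => φ^[k] C := antitone_nat_of_succ_le fun k => by
    rw [Function.iterate_succ_apply']
    exact apply_le_self_of_lt_self hmono hlt _
  have hinf := tendsto_atTop_ciInf hanti (OrderBot.bddBelow _)
  set L := ⨅ k, φ^[k] C
  suffices L = 0 from this ▸ hinf
  by_contra! hL
  obtain ⟨k, hk⟩ := (hinf.eventually (husc L L (hlt L (pos_iff_ne_zero.2 hL)))).exists
  have hLk : L ≤ φ^[k + 1] C := ciInf_le (OrderBot.bddBelow _) (k + 1)
  rw [Function.iterate_succ_apply'] at hLk
  exact hk.not_ge hLk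

end Contraction

section Pieces

variable {X : Type*} [MetricSpace X] {n m : ℕ} {φ : ℝ≥0 → ℝ≥0}
  {f : Fin n → (Fin m → X) → X}

lemma nndist_fA_le (hmono : Monotone φ)
    (hf : ∀ i, ∀ x y : Fin m → X, nndist (f i x) (f i y) ≤ φ (nndist x y)) :
    ∀ k (α : CodeSpace n m) (x y : Xk X m k),
      nndist (fA f k α x) (fA f k α y) ≤ φ^[k + 1] (nndist x y)
  | 0, α, x, y => hf (α 0) x y
  | k + 1, α, x, y => by
      refine (hf (α 0) _ _).trans ?_
      rw [Function.iterate_succ_apply']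
      refine hmono (nndist_pi_le_iff.2 fun i => ?_)
      exact (nndist_fA_le hmono hf k (shiftCode α i) (x i) (y i)).trans
        (hmono.iterate (k + 1) (nndist_le_pi_nndist x y i))

lemma ediam_image_fA_le (hmono : Monotone φ)
    (hf : ∀ i, ∀ x y : Fin m → X, nndist (f i x) (f i y) ≤ φ (nndist x y))
    (k : ℕ) (α : CodeSpace n m) {K : Set X} {C : ℝ≥0}
    (hC : ∀ ⦃a⦄, a ∈ K → ∀ ⦃b⦄, b ∈ K → nndist a b ≤ C) :
    Metric.ediam (fA f k α '' Spow m K k) ≤ φ^[k + 1] C := by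
  refine Metric.ediam_image_le_iff.2 fun x hx y hy => ?_
  rw [edist_nndist, ENNReal.coe_le_coe]
  exact (nndist_fA_le hmono hf k α x y).trans
    (hmono.iterate (k + 1) (nndist_le_of_mem_Spow hC k hx hy))

lemma tendsto_ediam_image_fA (hmono : Monotone φ) (husc : UpperSemicontinuous φ)
    (hlt : ∀ t, 0 < t → φ t < t)
    (hf : ∀ i, ∀ x y : Fin m → X, nndist (f i x) (f i y) ≤ φ (nndist x y))
    (α : CodeSpace n m) {K : Set X} (hK : Bornology.IsBounded K) :
    Tendsto (fun k => Metric.ediam (fA f k α '' Spow m K k)) atTop (𝓝 0) := by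
  obtain ⟨C, hC⟩ := Metric.isBounded_iff_nndist.1 hK
  have hiter : Tendsto (fun k => (φ^[k + 1] C : ℝ≥0∞)) atTop (𝓝 0) :=
    ENNReal.tendsto_coe.2 ((tendsto_iterate_nhds_zero hmono husc hlt C).comp
      (tendsto_add_atTop_nat 1))
  exact tendsto_of_tendsto_of_tendsto_of_le_of_le tendsto_const_nhds hiter
    (fun _ => zero_le) fun k => ediam_image_fA_le hmono hf k α hC

end Pieces

lemma Metric.hausdorffEDist_singleton_le_ediam {X : Type*} [PseudoEMetricSpace X]
    {s t : Set X} {p : X} (hs : s.Nonempty) (hst : s ⊆ t) (hp : p ∈ t) :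
    hausdorffEDist s {p} ≤ ediam t :=
  (hausdorffEDist_le_ediam hs (Set.singleton_nonempty p)).trans
    (ediam_mono (Set.union_subset hst (Set.singleton_subset_iff.2 hp)))

theorem code_pieces_tendsto_singleton_general
    {X : Type*} [MetricSpace X]
    {n m : ℕ}
    (φ : ℝ≥0 → ℝ≥0)
    (hmono : Monotone φ) (husc : UpperSemicontinuous φ)
    (hlt : ∀ t : ℝ≥0, 0 < t → φ t < t)
    (f : Fin n → (Fin m → X) → X)
    (hf : ∀ i, ∀ x y : Fin m → X, nndist (f i x) (f i y) ≤ φ (nndist x y))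
    (A : Set X) (hAc : IsCompact A)
    (g : CodeSpace n m → X)
    (hg : ∀ α : CodeSpace n m, (⋂ k : ℕ, fA f k α '' Spow m A k) = {g α})
    (α : CodeSpace n m) (H : Set X) (hHc : IsCompact H) (hHne : H.Nonempty) :
    Tendsto (fun k : ℕ => EMetric.hausdorffEdist (fA f k α '' Spow m H k) ({g α} : Set X))
      atTop (𝓝 0) := by
  have hH k : fA f k α '' Spow m H k ⊆ fA f k α '' Spow m (H ∪ A) k :=
    Set.image_mono (Spow_mono Set.subset_union_left k)
  have hgα k : g α ∈ fA f k α '' Spow m (H ∪ A) k :=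
    Set.image_mono (Spow_mono Set.subset_union_right k)
      (Set.mem_iInter.1 ((hg α).superset rfl) k)
  have hdiam := tendsto_ediam_image_fA hmono husc hlt hf α (hHc.isBounded.union hAc.isBounded)
  exact tendsto_of_tendsto_of_tendsto_of_le_of_le tendsto_const_nhds hdiam (fun _ => zero_le)
    fun k => Metric.hausdorffEDist_singleton_le_ediam
      ((Spow_nonempty hHne k).image _) (hH k) (hgα k)

/-- For every `α ∈ Ω` and nonempty compact `H ⊆ X`, the sets
`f_{α|_k}(H_k)` converge to the singleton `{g α}` in the Hausdorff metric. -/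
theorem code_pieces_tendsto_singleton
    {X : Type*} [MetricSpace X] [CompleteSpace X]
    {n m : ℕ} (hn : 0 < n) (hm : 0 < m)
    (φ : ℝ≥0 → ℝ≥0)
    (hmono : Monotone φ) (husc : UpperSemicontinuous φ)
    (hlt : ∀ t : ℝ≥0, 0 < t → φ t < t)
    (f : Fin n → (Fin m → X) → X)
    (hf : ∀ i, ∀ x y : Fin m → X, nndist (f i x) (f i y) ≤ φ (nndist x y))
    (A : Set X) (hAne : A.Nonempty) (hAc : IsCompact A)
    (hAfix : (⋃ i, f i '' Set.univ.pi fun _ => A) = A)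
    (g : CodeSpace n m → X)
    (hg : ∀ α : CodeSpace n m, (⋂ k : ℕ, fA f k α '' Spow m A k) = {g α})
    (α : CodeSpace n m) (H : Set X) (hHc : IsCompact H) (hHne : H.Nonempty) :
    Tendsto (fun k : ℕ => EMetric.hausdorffEdist (fA f k α '' Spow m H k) ({g α} : Set X))
      atTop (𝓝 0) :=
  code_pieces_tendsto_singleton_general φ hmono husc hlt f hf A hAc g hg α H hHc hHne
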